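/- Under the hypotheses of the previous setting (asymptotically regular family, irreducible skeleton chain), the limit μ(i) = lim_{ε↓0} μ(i,ε) exists in [0,1] for each state i, and ∑_{i∈S} μ(i) = 1. -/

import Mathlib

/-!
Write `S(i,ε) = ∑_{k ≠ i} q_{ik}(ε) = 1 / T(i,ε)`. Reweighting `μ(·,ε)` by the exit rates,
`ν(i,ε) ∝ μ(i,ε) S(i,ε)`, gives a stationary distribution of the jump chain
`q_{ij}(ε) / S(i,ε)`, which converges to the skeleton chain `P`. Since `P` is irreducible, its
stationary distribution `λ` is unique and positive, so by compactness of the simplex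
`ν(·,ε) → λ`. Undoing the reweighting,
`μ(j,ε) = ν(j,ε) / ∑ᵢ ν(i,ε) S(j,ε) / S(i,ε)`,
and asymptotic regularity makes every ratio of exit rates converge in `[0, ∞]`. As `λ > 0` and
the `i = j` term of the sum is `1`, the quotient converges in `ℝ≥0∞` to a finite limit.
-/

open Filter Topology Finset Matrix

namespace Matrix

variable {ι R : Type*} [Fintype ι] [DecidableEq ι]

theorem vecMul_pow_eq_self [Semiring R] {P : Matrix ι ι R} {v : ι → R} (hv : v ᵥ* P = v)
    (n : ℕ) : v ᵥ* (P ^ n) = v := by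
  induction n with
  | zero => simp
  | succ n ih => rw [pow_succ, ← vecMul_vecMul, ih, hv]

section OrderedField

variable [Field R] [LinearOrder R] [IsStrictOrderedRing R] {P : Matrix ι ι R}

theorem pos_of_vecMul_eq_self (hP : ∀ i j, 0 ≤ P i j) (hirr : ∀ i j, ∃ n, 0 < (P ^ n) i j)
    {v : ι → R} (hv0 : 0 ≤ v) (hv : v ᵥ* P = v) {i : ι} (hi : 0 < v i) (j : ι) :
    0 < v j := by
  obtain ⟨n, hn⟩ := hirr i j
  calc 0 < v i * (P ^ n) i j := mul_pos hi hn
    _ ≤ ∑ k, v k * (P ^ n) k j :=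
      single_le_sum (fun k _ => mul_nonneg (hv0 k) (pow_apply_nonneg hP n k j)) (mem_univ i)
    _ = v j := congrFun (vecMul_pow_eq_self hv n) j

theorem pos_of_mem_stdSimplex (hP : ∀ i j, 0 ≤ P i j) (hirr : ∀ i j, ∃ n, 0 < (P ^ n) i j)
    {v : ι → R} (hv : v ∈ stdSimplex R ι) (hvP : v ᵥ* P = v) (j : ι) : 0 < v j := by
  obtain ⟨i, -, hi⟩ := exists_lt_of_sum_lt (s := univ) (f := 0) (g := v) (by simp [hv.2])
  exact pos_of_vecMul_eq_self hP hirr hv.1 hvP hi j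

theorem eq_of_vecMul_eq_self (hP : ∀ i j, 0 ≤ P i j) (hirr : ∀ i j, ∃ n, 0 < (P ^ n) i j)
    {v w : ι → R} (hv : v ∈ stdSimplex R ι) (hvP : v ᵥ* P = v)
    (hw : w ∈ stdSimplex R ι) (hwP : w ᵥ* P = w) : w = v := by
  -- Removing from `w` the largest multiple of `v` below it leaves a nonnegative stationary
  -- vector with a zero entry, which therefore vanishes.
  have hvpos := pos_of_mem_stdSimplex hP hirr hv hvP
  have : Nonempty ι := univ_nonempty_iff.1 (nonempty_of_sum_ne_zero (hv.2.trans_ne one_ne_zero))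
  obtain ⟨i₀, hi₀⟩ := Finite.exists_min fun i => w i / v i
  set c := w i₀ / v i₀
  set y := w - c • v
  have hy0 : 0 ≤ y := fun i => sub_nonneg.2 ((le_div_iff₀ (hvpos i)).1 (hi₀ i))
  have hyP : y ᵥ* P = y := by rw [sub_vecMul, smul_vecMul, hwP, hvP]
  have hyi₀ : y i₀ = 0 := by simp [y, c, div_mul_cancel₀ _ (hvpos i₀).ne']
  have hy : y = 0 := by
    by_contra hne
    obtain ⟨k, hk⟩ : ∃ k, y k ≠ 0 := Function.ne_iff.1 hne
    exact (pos_of_vecMul_eq_self hP hirr hy0 hyP ((hy0 k).lt_of_ne' hk) i₀).ne' hyi₀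
  have hwc : w = c • v := sub_eq_zero.1 hy
  have hc : c = 1 := by
    simpa [← mul_sum, hv.2, hw.2, eq_comm] using congrArg (fun u => ∑ i, u i) hwc
  rw [hwc, hc, one_smul]

end OrderedField

theorem tendsto_of_vecMul_eq_self {α : Type*} {l : Filter α} {P : Matrix ι ι ℝ}
    (hP : ∀ i j, 0 ≤ P i j) (hirr : ∀ i j, ∃ n, 0 < (P ^ n) i j)
    {v : ι → ℝ} (hv : v ∈ stdSimplex ℝ ι) (hvP : v ᵥ* P = v)
    {M : α → Matrix ι ι ℝ} {w : α → ι → ℝ} (hM : Tendsto M l (𝓝 P))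
    (hw : ∀ᶠ a in l, w a ∈ stdSimplex ℝ ι ∧ w a ᵥ* M a = w a) :
    Tendsto w l (𝓝 v) := by
  refine (isCompact_stdSimplex ℝ ι).tendsto_nhds_of_unique_mapClusterPt
    (hw.mono fun _ h => h.1) fun y hy hclust => ?_
  obtain ⟨U, hUl, hU⟩ := mapClusterPt_iff_ultrafilter.1 hclust
  have hMU := hM.mono_left hUl
  have hyP : y ᵥ* P = y := by
    have hcont : Continuous fun p : (ι → ℝ) × Matrix ι ι ℝ => p.1 ᵥ* p.2 :=
      continuous_fst.matrix_vecMul continuous_snd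
    refine tendsto_nhds_unique ((hcont.tendsto _).comp (hU.prodMk_nhds hMU)) ?_
    exact hU.congr' ((hw.filter_mono hUl).mono fun a ha => ha.2.symm)
  exact eq_of_vecMul_eq_self hP hirr hv hvP hy hyP

end Matrix

namespace ENNReal

variable {α κ : Type*} {l : Filter α}

theorem ofReal_div_eq_inv_ofReal_div {x y : ℝ} (hx : 0 < x) (hy : 0 < y) :
    ENNReal.ofReal (x / y) = (ENNReal.ofReal (y / x))⁻¹ := by
  rw [← ofReal_inv_of_pos (div_pos hy hx), inv_div]

theorem ofReal_sum_div_sum {s t : Finset κ} (ht : t.Nonempty) {f g : κ → ℝ}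
    (hf : ∀ k ∈ s, 0 < f k) (hg : ∀ k ∈ t, 0 < g k) :
    ENNReal.ofReal ((∑ k ∈ s, f k) / ∑ k ∈ t, g k) =
      ∑ k ∈ s, (∑ k' ∈ t, (ENNReal.ofReal (f k / g k'))⁻¹)⁻¹ := by
  have hgt : 0 < ∑ k ∈ t, g k := sum_pos hg ht
  rw [sum_div, ofReal_sum_of_nonneg fun k hk => div_nonneg (hf k hk).le hgt.le]
  refine sum_congr rfl fun k hk => ?_
  rw [ofReal_div_eq_inv_ofReal_div (hf k hk) hgt, sum_div,
    ofReal_sum_of_nonneg fun k' hk' => div_nonneg (hg k' hk').le (hf k hk).le]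
  congr 1
  exact sum_congr rfl fun k' hk' => ofReal_div_eq_inv_ofReal_div (hg k' hk') (hf k hk)

theorem exists_tendsto_ofReal_sum_div_sum {s t : Finset κ} (ht : t.Nonempty)
    {f g : α → κ → ℝ} (hf : ∀ᶠ a in l, ∀ k ∈ s, 0 < f a k)
    (hg : ∀ᶠ a in l, ∀ k ∈ t, 0 < g a k)
    (h : ∀ k ∈ s, ∀ k' ∈ t,
      ∃ L, Tendsto (fun a => ENNReal.ofReal (f a k / g a k')) l (𝓝 L)) :
    ∃ L, Tendsto (fun a => ENNReal.ofReal ((∑ k ∈ s, f a k) / ∑ k ∈ t, g a k)) l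
      (𝓝 L) := by
  choose! L hL using h
  refine ⟨∑ k ∈ s, (∑ k' ∈ t, (L k k')⁻¹)⁻¹, ?_⟩
  refine Tendsto.congr' ((hf.and hg).mono fun a ha => (ofReal_sum_div_sum ht ha.1 ha.2).symm) ?_
  exact tendsto_finsetSum _ fun k hk =>
    (tendsto_finsetSum _ fun k' hk' => (hL k hk k' hk').inv).inv

end ENNReal

theorem exists_tendsto_div_sum_mul {α ι : Type*} [Fintype ι] {l : Filter α} [l.NeBot]
    {ν ρ : α → ι → ℝ} {v : ι → ℝ} (hν : Tendsto ν l (𝓝 v)) (hv : ∀ i, 0 < v i)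
    (hρ : ∀ i, ∃ R, Tendsto (fun a => ENNReal.ofReal (ρ a i)) l (𝓝 R)) {j : ι}
    (hρj : ∀ᶠ a in l, 0 ≤ ρ a ∧ ρ a j = 1) :
    ∃ m : ℝ, Tendsto (fun a => ν a j / ∑ i, ν a i * ρ a i) l (𝓝 m) := by
  choose R hR using hρ
  have hνi : ∀ i, Tendsto (fun a => ν a i) l (𝓝 (v i)) := tendsto_pi_nhds.1 hν
  have hνpos : ∀ᶠ a in l, ∀ i, 0 < ν a i :=
    eventually_all.2 fun i => (hνi i).eventually (lt_mem_nhds (hv i))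
  have hνj : ∀ᶠ a in l, 0 < ν a j ∧ ν a j ≤ ∑ i, ν a i * ρ a i :=
    (hνpos.and hρj).mono fun a ⟨hpos, hρ0, hρ1⟩ => ⟨hpos j, by
      simpa [hρ1] using single_le_sum (fun i _ => mul_nonneg (hpos i).le (hρ0 i)) (mem_univ j)⟩
  set L := ENNReal.ofReal (v j) / ∑ i, ENNReal.ofReal (v i) * R i
  have hL : Tendsto (fun a => ENNReal.ofReal (ν a j / ∑ i, ν a i * ρ a i)) l (𝓝 L) := by
    refine Tendsto.congr' ?_ <| ENNReal.Tendsto.div (ENNReal.tendsto_ofReal (hνi j))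
      (.inl (ENNReal.ofReal_pos.2 (hv j)).ne')
      (tendsto_finsetSum _ fun i _ => ENNReal.Tendsto.mul (ENNReal.tendsto_ofReal (hνi i))
        (.inl (ENNReal.ofReal_pos.2 (hv i)).ne') (hR i) (.inr ENNReal.ofReal_ne_top))
      (.inr ENNReal.ofReal_ne_top)
    filter_upwards [hνpos, hρj, hνj] with a hpos hρ0 hle
    rw [ENNReal.ofReal_div_of_pos (hle.1.trans_le hle.2), ENNReal.ofReal_sum_of_nonneg
      fun i _ => mul_nonneg (hpos i).le (hρ0.1 i)]
    simp_rw [ENNReal.ofReal_mul (hpos _).le]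
  have hL1 : L ≤ 1 := le_of_tendsto hL <| hνj.mono fun a ha =>
    ENNReal.ofReal_le_one.2 (div_le_one_of_le₀ ha.2 (ha.1.le.trans ha.2))
  have hLtop : L ≠ ⊤ := (hL1.trans_lt ENNReal.one_lt_top).ne
  refine ⟨L.toReal, ((ENNReal.tendsto_toReal hLtop).comp hL).congr' ?_⟩
  filter_upwards [hνj] with a ha
  exact ENNReal.toReal_ofReal (div_nonneg ha.1.le (ha.1.le.trans ha.2))

section RateMatrix

variable {α ι : Type*} [Fintype ι] [DecidableEq ι] {l : Filter α}

noncomputable section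

def exitRate (q : Matrix ι ι ℝ) (i : ι) : ℝ := ∑ k ∈ univ.erase i, q i k

def jumpMatrix (q : Matrix ι ι ℝ) : Matrix ι ι ℝ :=
  of fun i j => if i = j then 0 else q i j / exitRate q i

def jumpDistribution (q : Matrix ι ι ℝ) (μ : ι → ℝ) (i : ι) : ℝ :=
  μ i * exitRate q i / ∑ k, μ k * exitRate q k

end

section Fixed

variable {q : Matrix ι ι ℝ} {μ : ι → ℝ}

theorem exitRate_pos [Nontrivial ι] (hq : ∀ i j, i ≠ j → 0 < q i j) (i : ι) :
    0 < exitRate q i :=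
  sum_pos (fun k hk => hq i k (ne_of_mem_erase hk).symm) univ_nontrivial.erase_nonempty

theorem jumpMatrix_nonneg (hq : ∀ i j, i ≠ j → 0 ≤ q i j) (i j : ι) :
    0 ≤ jumpMatrix q i j := by
  rw [jumpMatrix, of_apply]
  split_ifs with h
  · rfl
  · exact div_nonneg (hq i j h) (sum_nonneg fun k hk => hq i k (ne_of_mem_erase hk).symm)

theorem sum_mul_exitRate_pos [Nontrivial ι] (hq : ∀ i j, i ≠ j → 0 < q i j)
    (hμ : μ ∈ stdSimplex ℝ ι) : 0 < ∑ k, μ k * exitRate q k := by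
  obtain ⟨i, -, hi⟩ := exists_lt_of_sum_lt (s := univ) (f := 0) (g := μ) (by simp [hμ.2])
  exact (mul_pos hi (exitRate_pos hq i)).trans_le <|
    single_le_sum (fun k _ => mul_nonneg (hμ.1 k) (exitRate_pos hq k).le) (mem_univ i)

theorem jumpDistribution_mem_stdSimplex [Nontrivial ι] (hq : ∀ i j, i ≠ j → 0 < q i j)
    (hμ : μ ∈ stdSimplex ℝ ι) : jumpDistribution q μ ∈ stdSimplex ℝ ι := by
  have hC := sum_mul_exitRate_pos hq hμ
  refine ⟨fun i => div_nonneg (mul_nonneg (hμ.1 i) (exitRate_pos hq i).le) hC.le, ?_⟩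
  simp only [jumpDistribution, ← sum_div, div_self hC.ne']

theorem jumpDistribution_vecMul_jumpMatrix [Nontrivial ι] (hq : ∀ i j, i ≠ j → 0 < q i j)
    (hbal : ∀ j, ∑ i ∈ univ.erase j, μ i * q i j = μ j * exitRate q j) :
    jumpDistribution q μ ᵥ* jumpMatrix q = jumpDistribution q μ := by
  ext j
  rw [vecMul_apply_eq_sum, ← sum_erase (a := j) _ (by simp [jumpMatrix])]
  calc ∑ i ∈ univ.erase j, jumpDistribution q μ i * jumpMatrix q i j
      = (∑ i ∈ univ.erase j, μ i * q i j) / ∑ k, μ k * exitRate q k := by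
        rw [sum_div]
        refine sum_congr rfl fun i hi => ?_
        rw [jumpMatrix, of_apply, if_neg (ne_of_mem_erase hi), jumpDistribution]
        field_simp [(exitRate_pos hq i).ne']
    _ = jumpDistribution q μ j := by rw [hbal]; rfl

theorem eq_div_sum_jumpDistribution_mul [Nontrivial ι] (hq : ∀ i j, i ≠ j → 0 < q i j)
    (hμ : μ ∈ stdSimplex ℝ ι) (j : ι) :
    μ j = jumpDistribution q μ j /
      ∑ i, jumpDistribution q μ i * (exitRate q j / exitRate q i) := by
  have hC := (sum_mul_exitRate_pos hq hμ).ne'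
  have hden : ∑ i, jumpDistribution q μ i * (exitRate q j / exitRate q i) =
      exitRate q j / ∑ k, μ k * exitRate q k := by
    calc ∑ i, jumpDistribution q μ i * (exitRate q j / exitRate q i)
        = ∑ i, μ i * (exitRate q j / ∑ k, μ k * exitRate q k) :=
          sum_congr rfl fun i _ => by
            rw [jumpDistribution]; field_simp [(exitRate_pos hq i).ne']
      _ = exitRate q j / ∑ k, μ k * exitRate q k := by rw [← sum_mul, hμ.2, one_mul]
  rw [hden, jumpDistribution]
  field_simp [(exitRate_pos hq j).ne']

end Fixed

section Family

variable {q : α → Matrix ι ι ℝ}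

theorem tendsto_jumpMatrix {P : Matrix ι ι ℝ} (hdiag : ∀ i, P i i = 0)
    (hP : ∀ i j, i ≠ j → Tendsto (fun a => q a i j / exitRate (q a) i) l (𝓝 (P i j))) :
    Tendsto (fun a => jumpMatrix (q a)) l (𝓝 P) := by
  refine tendsto_pi_nhds.2 fun i => tendsto_pi_nhds.2 fun j => ?_
  by_cases h : i = j
  · subst h
    simpa [jumpMatrix, hdiag] using tendsto_const_nhds
  · simpa [jumpMatrix, h] using hP i j h

theorem exists_tendsto_ofReal_exitRate_div [Nontrivial ι]
    (hq : ∀ᶠ a in l, ∀ i j, i ≠ j → 0 < q a i j)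
    (hratio : ∀ i j k m, i ≠ j → k ≠ m →
      ∃ L, Tendsto (fun a => ENNReal.ofReal (q a i j / q a k m)) l (𝓝 L)) (i j : ι) :
    ∃ R, Tendsto (fun a => ENNReal.ofReal (exitRate (q a) j / exitRate (q a) i)) l (𝓝 R) :=
  ENNReal.exists_tendsto_ofReal_sum_div_sum univ_nontrivial.erase_nonempty
    (hq.mono fun _ h k hk => h j k (ne_of_mem_erase hk).symm)
    (hq.mono fun _ h k hk => h i k (ne_of_mem_erase hk).symm)
    fun k hk k' hk' => hratio j k i k' (ne_of_mem_erase hk).symm (ne_of_mem_erase hk').symm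

theorem exists_tendsto_of_tendsto_jumpDistribution [l.NeBot] [Nontrivial ι]
    {μ : α → ι → ℝ} (hq : ∀ᶠ a in l, ∀ i j, i ≠ j → 0 < q a i j)
    (hμ : ∀ᶠ a in l, μ a ∈ stdSimplex ℝ ι)
    (hratio : ∀ i j k m, i ≠ j → k ≠ m →
      ∃ L, Tendsto (fun a => ENNReal.ofReal (q a i j / q a k m)) l (𝓝 L))
    {v : ι → ℝ} (hν : Tendsto (fun a => jumpDistribution (q a) (μ a)) l (𝓝 v))
    (hv : ∀ i, 0 < v i) (j : ι) : ∃ m, Tendsto (fun a => μ a j) l (𝓝 m) := by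
  have hρ : ∀ᶠ a in l, (0 ≤ fun i => exitRate (q a) j / exitRate (q a) i) ∧
      exitRate (q a) j / exitRate (q a) j = 1 := hq.mono fun a hqa =>
    ⟨fun i => div_nonneg (exitRate_pos hqa j).le (exitRate_pos hqa i).le,
      div_self (exitRate_pos hqa j).ne'⟩
  obtain ⟨m, hm⟩ := exists_tendsto_div_sum_mul hν hv
    (fun i => exists_tendsto_ofReal_exitRate_div hq hratio i j) hρ
  exact ⟨m, hm.congr' <| (hq.and hμ).mono fun a ⟨hqa, hμa⟩ =>
    (eq_div_sum_jumpDistribution_mul hqa hμa j).symm⟩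

end Family

end RateMatrix

/-- For an asymptotically regular family of continuous-time Markov chains whose skeleton
chain is irreducible, the limits `μ(i) = lim_{ε↓0} μ(i,ε)` of the stationary
distributions exist in `[0,1]` and sum to `1`. -/
theorem stmt8 (N : ℕ) (hN : 2 ≤ N) (q : ℝ → Fin N → Fin N → ℝ)
    (hpos : ∀ ε > (0:ℝ), ∀ i j, i ≠ j → 0 < q ε i j)
    (hAR : ∀ i j k l : Fin N, i ≠ j → k ≠ l → ∃ L : ENNReal,
      Tendsto (fun ε => ENNReal.ofReal (q ε i j / q ε k l)) (𝓝[>] (0:ℝ)) (𝓝 L))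
    (P : Matrix (Fin N) (Fin N) ℝ) (hPdiag : ∀ i, P i i = 0)
    (hP : ∀ i j : Fin N, i ≠ j → Tendsto
      (fun ε => q ε i j / ∑ j' ∈ Finset.univ.erase i, q ε i j')
      (𝓝[>] (0:ℝ)) (𝓝 (P i j)))
    (hirr : ∀ i j : Fin N, ∃ n : ℕ, 0 < (P ^ n) i j)
    (lam : Fin N → ℝ)
    (hlamnn : ∀ i, 0 ≤ lam i) (hlam1 : ∑ i, lam i = 1)
    (hlamstat : ∀ j, ∑ i, lam i * P i j = lam j)
    (μ : ℝ → Fin N → ℝ)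
    (hμ : ∀ ε > (0:ℝ), (∀ i, 0 ≤ μ ε i) ∧ (∑ i, μ ε i = 1) ∧
      ∀ j, ∑ i ∈ Finset.univ.erase j, μ ε i * q ε i j
        = μ ε j * ∑ k ∈ Finset.univ.erase j, q ε j k) :
    ∃ μ₀ : Fin N → ℝ,
      (∀ i, μ₀ i ∈ Set.Icc (0:ℝ) 1 ∧
        Tendsto (fun ε => μ ε i) (𝓝[>] (0:ℝ)) (𝓝 (μ₀ i))) ∧
      ∑ i, μ₀ i = 1 := by
  have : Nontrivial (Fin N) := Fin.nontrivial_iff_two_le.2 hN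
  have hq : ∀ᶠ ε in 𝓝[>] (0:ℝ), ∀ i j, i ≠ j → 0 < q ε i j :=
    eventually_nhdsWithin_of_forall hpos
  have hμ' : ∀ᶠ ε in 𝓝[>] (0:ℝ), μ ε ∈ stdSimplex ℝ (Fin N) ∧
      ∀ j, ∑ i ∈ univ.erase j, μ ε i * q ε i j = μ ε j * exitRate (q ε) j :=
    eventually_nhdsWithin_of_forall fun ε hε =>
      ⟨⟨(hμ ε hε).1, (hμ ε hε).2.1⟩, (hμ ε hε).2.2⟩
  have hJ : Tendsto (fun ε => jumpMatrix (q ε)) (𝓝[>] 0) (𝓝 P) :=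
    tendsto_jumpMatrix hPdiag hP
  have hPnn : ∀ i j, 0 ≤ P i j := fun i j =>
    ge_of_tendsto (tendsto_pi_nhds.1 (tendsto_pi_nhds.1 hJ i) j) <|
      hq.mono fun ε hqε => jumpMatrix_nonneg (fun i j hij => (hqε i j hij).le) i j
  have hlam : lam ∈ stdSimplex ℝ (Fin N) := ⟨hlamnn, hlam1⟩
  have hlamP : lam ᵥ* P = lam := funext hlamstat
  have hν : Tendsto (fun ε => jumpDistribution (q ε) (μ ε)) (𝓝[>] 0) (𝓝 lam) :=
    tendsto_of_vecMul_eq_self hPnn hirr hlam hlamP hJ <| (hq.and hμ').mono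
      fun ε ⟨hqε, hμε, hbal⟩ => ⟨jumpDistribution_mem_stdSimplex hqε hμε,
        jumpDistribution_vecMul_jumpMatrix hqε hbal⟩
  choose m hm using exists_tendsto_of_tendsto_jumpDistribution hq (hμ'.mono fun _ h => h.1) hAR
    hν (pos_of_mem_stdSimplex hPnn hirr hlam hlamP)
  have hmem : m ∈ stdSimplex ℝ (Fin N) :=
    (isClosed_stdSimplex ℝ _).mem_of_tendsto (tendsto_pi_nhds.2 hm) (hμ'.mono fun _ h => h.1)
  exact ⟨m, fun i => ⟨mem_Icc_of_mem_stdSimplex hmem i, hm i⟩, hmem.2⟩
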